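/- Let G be a group, H a finite-index normal subgroup, and suppose (i) H embeds into a group S, (ii) for every finite group F, the wreath product F ≀ S embeds into S. Then G embeds into S. -/
import Mathlib

/-- The left-translation permutation action of a group `F` on the direct product `F → S`
of copies of `S` indexed by `F`, as a homomorphism `F →* MulAut (F → S)`. This is the
action defining the wreath product `F ≀ S = (F → S) ⋊ F`. -/
def permMulAut (F S : Type*) [Group F] [Group S] : F →* MulAut (F → S) where
  toFun q :=
    { toFun := fun f x => f (q⁻¹ * x)
      invFun := fun f x => f (q * x)
      left_inv := fun f => funext fun x => by simp
      right_inv := fun f => funext fun x => by simp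
      map_mul' := fun f g => rfl }
  map_one' := by
    ext f x
    simp
  map_mul' q q' := by
    ext f x
    simp [mul_assoc]

/-- Let `G` be a group, `H` a finite-index normal subgroup, and suppose (i) `H` embeds
into a group `S`, and (ii) for every finite group `F`, the wreath product `F ≀ S` embeds
into `S`. Then `G` embeds into `S`. -/
theorem stmt_17 {G : Type u} {S : Type v} [Group G] [Group S]
    (H : Subgroup G) [H.Normal] [H.FiniteIndex]
    (h1 : ∃ f : H →* S, Function.Injective f)
    (h2 : ∀ (F : Type u) [Group F] [Finite F],
      ∃ f : ((F → S) ⋊[permMulAut F S] F) →* S, Function.Injective f) :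
    ∃ f : G →* S, Function.Injective f := by
  obtain ⟨ι, hι⟩ := h1
  obtain ⟨ψ, hψ⟩ := h2 (G ⧸ H)
  set π : G →* G ⧸ H := QuotientGroup.mk' H with hπ
  set t : G ⧸ H → G := Quotient.out with ht
  have htπ : ∀ x : G ⧸ H, π (t x) = x := fun x => Quotient.out_eq x
  have hmem : ∀ (g : G) (x : G ⧸ H), (t x)⁻¹ * g * t ((π g)⁻¹ * x) ∈ H := by
    intro g x
    have : π ((t x)⁻¹ * g * t ((π g)⁻¹ * x)) = 1 := by
      simp [htπ, mul_assoc]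
    exact (QuotientGroup.eq_one_iff _).mp this
  set c : G → (G ⧸ H) → S := fun g x => ι ⟨(t x)⁻¹ * g * t ((π g)⁻¹ * x), hmem g x⟩ with hc
  have hcone : ∀ x, c 1 x = 1 := by
    intro x
    have : (⟨(t x)⁻¹ * 1 * t ((π 1)⁻¹ * x), hmem 1 x⟩ : H) = 1 := by
      ext; simp
    rw [hc]; dsimp only; rw [this, map_one]
  have hcmul : ∀ g g' x, c (g * g') x = c g x * c g' ((π g)⁻¹ * x) := by
    intro g g' x
    rw [hc]
    dsimp only
    rw [← map_mul]
    congr 1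
    ext
    simp [mul_assoc]
  refine ⟨ψ.comp { toFun := fun g => ⟨c g, π g⟩, map_one' := ?_, map_mul' := ?_ }, ?_⟩
  · ext x
    · exact hcone x
    · simp
  · intro g g'
    ext x
    · exact hcmul g g' x
    · simp
  · intro g g' hgg'
    have h' : (⟨c g, π g⟩ : (G ⧸ H → S) ⋊[permMulAut (G ⧸ H) S] (G ⧸ H)) = ⟨c g', π g'⟩ := hψ hgg'
    have hπg : π g = π g' := congrArg SemidirectProduct.right h'
    have hcg : c g = c g' := congrArg SemidirectProduct.left h'
    have := congrFun hcg (π g)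
    rw [hc] at this
    dsimp only at this
    have h2 := hι this
    have h3 := congrArg Subtype.val h2
    dsimp at h3
    rw [hπg] at h3
    exact mul_left_cancel (mul_right_cancel h3)
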